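/- Let Ω = {(x,t_2,t_3) ∈ ℝ³ : 3t_2 − t_3³ ≠ 0} and define q_1 : Ω → ℝ by q_1(x,t_2,t_3) = (t_3^5 + 15 t_3³ t_2 − 30x) / (5(3t_2 − t_3³)). Then q_1 solves the first flow of the nonlocal Harry Dym hierarchy q_{1,t_2} = ½ q_1 q_{1,x} + ½ ∂^{−1}(q_1 q_{1,xx}): there exists a smooth function A : Ω → ℝ with ∂A/∂x = q_1 · ∂²q_1/∂x² such that ∂q_1/∂t_2 = ½ q_1 ∂q_1/∂x + ½ A on Ω. -/

import Mathlib

noncomputable section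

/-- `Ω = {(x,t₂,t₃) : 3t₂ - t₃³ ≠ 0}`. -/
def Ω16 : Set (ℝ × ℝ × ℝ) := {p | 3 * p.2.1 - p.2.2 ^ 3 ≠ 0}

/-- `q₁(x,t₂,t₃) = (t₃⁵ + 15 t₃³ t₂ - 30x) / (5(3t₂ - t₃³))`. -/
def q16 (p : ℝ × ℝ × ℝ) : ℝ :=
  (p.2.2 ^ 5 + 15 * p.2.2 ^ 3 * p.2.1 - 30 * p.1) / (5 * (3 * p.2.1 - p.2.2 ^ 3))

/-!
`q₁` is affine in `x` with slope `-6 / (3t₂ - t₃³)`, so `q_{1,xx} = 0` and the nonlocal term may be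
any function of `(t₂, t₃)` alone; the equation then forces `A = 6t₃³ / (3t₂ - t₃³)`. Restricted to a
line parallel to a coordinate axis, each of `q₁`, `q_{1,x}` and `A` is a linear fractional function
of the line parameter, so every partial derivative needed is the derivative at `0` of
`t ↦ (α + βt) / (γ + δt)`.
-/

open Filter Topology

theorem hasDerivAt_affine_div_affine {𝕜 : Type*} [NontriviallyNormedField 𝕜] {α β γ δ : 𝕜}
    (hγ : γ ≠ 0) :
    HasDerivAt (fun t => (α + β * t) / (γ + δ * t)) ((β * γ - α * δ) / γ ^ 2) 0 := by
  have h := (((hasDerivAt_id (0 : 𝕜)).const_mul β).const_add α).fun_div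
    (((hasDerivAt_id (0 : 𝕜)).const_mul δ).const_add γ) (by simpa using hγ)
  simpa using h

theorem fderiv_apply_eq_of_line_eq_affine_div_affine {𝕜 E : Type*} [NontriviallyNormedField 𝕜]
    [NormedAddCommGroup E] [NormedSpace 𝕜 E] {f : E → 𝕜} {x v : E} {α β γ δ : 𝕜}
    (hf : DifferentiableAt 𝕜 f x) (hγ : γ ≠ 0)
    (hline : ∀ t : 𝕜, f (x + t • v) = (α + β * t) / (γ + δ * t)) :
    fderiv 𝕜 f x v = (β * γ - α * δ) / γ ^ 2 := by
  rw [← hf.lineDeriv_eq_fderiv]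
  refine HasLineDerivAt.lineDeriv ?_
  simpa only [HasLineDerivAt, hline] using hasDerivAt_affine_div_affine hγ

theorem isOpen_Ω16 : IsOpen Ω16 :=
  isOpen_ne_fun (f := fun p : ℝ × ℝ × ℝ => 3 * p.2.1 - p.2.2 ^ 3) (by fun_prop) continuous_const

theorem differentiableAt_q16 {p : ℝ × ℝ × ℝ} (hp : p ∈ Ω16) : DifferentiableAt ℝ q16 p := by
  have h5 : (5 : ℝ) * (3 * p.2.1 - p.2.2 ^ 3) ≠ 0 := mul_ne_zero (by norm_num) hp
  unfold q16
  fun_prop (disch := exact h5)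

theorem fderiv_q16_e1 {p : ℝ × ℝ × ℝ} (hp : p ∈ Ω16) :
    fderiv ℝ q16 p (1, 0, 0) = -6 / (3 * p.2.1 - p.2.2 ^ 3) := by
  have hD : 3 * p.2.1 - p.2.2 ^ 3 ≠ 0 := hp
  have hline (t : ℝ) : q16 (p + t • (1, 0, 0)) =
      (p.2.2 ^ 5 + 15 * p.2.2 ^ 3 * p.2.1 - 30 * p.1 + -30 * t) /
        (5 * (3 * p.2.1 - p.2.2 ^ 3) + 0 * t) := by
    simp only [q16, Prod.smul_mk, smul_eq_mul, mul_one, mul_zero, Prod.fst_add, Prod.snd_add,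
      add_zero]
    ring
  rw [fderiv_apply_eq_of_line_eq_affine_div_affine (differentiableAt_q16 hp)
    (mul_ne_zero (by norm_num) hD) hline]
  field_simp
  ring

theorem fderiv_q16_e2 {p : ℝ × ℝ × ℝ} (hp : p ∈ Ω16) :
    fderiv ℝ q16 p (0, 1, 0) = 3 * (p.2.2 ^ 3 - q16 p) / (3 * p.2.1 - p.2.2 ^ 3) := by
  have hD : 3 * p.2.1 - p.2.2 ^ 3 ≠ 0 := hp
  have hline (t : ℝ) : q16 (p + t • (0, 1, 0)) =
      (p.2.2 ^ 5 + 15 * p.2.2 ^ 3 * p.2.1 - 30 * p.1 + 15 * p.2.2 ^ 3 * t) /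
        (5 * (3 * p.2.1 - p.2.2 ^ 3) + 15 * t) := by
    simp only [q16, Prod.smul_mk, smul_eq_mul, mul_one, mul_zero, Prod.fst_add, Prod.snd_add,
      add_zero]
    ring
  rw [fderiv_apply_eq_of_line_eq_affine_div_affine (differentiableAt_q16 hp)
    (mul_ne_zero (by norm_num) hD) hline, q16]
  field_simp
  ring

theorem fderiv_fderiv_q16_e1_e1 {p : ℝ × ℝ × ℝ} (hp : p ∈ Ω16) :
    fderiv ℝ (fun s => fderiv ℝ q16 s (1, 0, 0)) p (1, 0, 0) = 0 := by
  have heq : (fun s => fderiv ℝ q16 s (1, 0, 0)) =ᶠ[𝓝 p]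
      fun s => -6 / (3 * s.2.1 - s.2.2 ^ 3) :=
    eventually_of_mem (isOpen_Ω16.mem_nhds hp) fun s hs => fderiv_q16_e1 hs
  have hdiff : DifferentiableAt ℝ (fun s : ℝ × ℝ × ℝ => -6 / (3 * s.2.1 - s.2.2 ^ 3)) p := by
    fun_prop (disch := exact hp)
  have hline (t : ℝ) : -6 / (3 * (p + t • (1, 0, 0)).2.1 - (p + t • (1, 0, 0)).2.2 ^ 3) =
      (-6 + 0 * t) / (3 * p.2.1 - p.2.2 ^ 3 + 0 * t) := by
    simp
  rw [heq.fderiv_eq, fderiv_apply_eq_of_line_eq_affine_div_affine hdiff hp hline]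
  simp

def A16 (p : ℝ × ℝ × ℝ) : ℝ := 6 * p.2.2 ^ 3 / (3 * p.2.1 - p.2.2 ^ 3)

theorem contDiffOn_A16 : ContDiffOn ℝ (⊤ : ℕ∞) A16 Ω16 :=
  ContDiffOn.div (by fun_prop) (by fun_prop) fun _ hp => hp

theorem fderiv_A16_e1 {p : ℝ × ℝ × ℝ} (hp : p ∈ Ω16) : fderiv ℝ A16 p (1, 0, 0) = 0 := by
  have hdiff : DifferentiableAt ℝ A16 p :=
    (contDiffOn_A16.contDiffAt (isOpen_Ω16.mem_nhds hp)).differentiableAt (by simp)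
  have hline (t : ℝ) : A16 (p + t • (1, 0, 0)) =
      (6 * p.2.2 ^ 3 + 0 * t) / (3 * p.2.1 - p.2.2 ^ 3 + 0 * t) := by
    simp [A16]
  rw [fderiv_apply_eq_of_line_eq_affine_div_affine hdiff hp hline]
  simp


theorem rational_solution_first_nonlocal_HD_flow :
    ∃ A : ℝ × ℝ × ℝ → ℝ, ContDiffOn ℝ (⊤ : ℕ∞) A Ω16 ∧
      (∀ p ∈ Ω16, fderiv ℝ A p ((1 : ℝ), (0 : ℝ), (0 : ℝ)) =
        q16 p * fderiv ℝ (fun s => fderiv ℝ q16 s ((1 : ℝ), (0 : ℝ), (0 : ℝ))) p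
          ((1 : ℝ), (0 : ℝ), (0 : ℝ))) ∧
      (∀ p ∈ Ω16, fderiv ℝ q16 p ((0 : ℝ), (1 : ℝ), (0 : ℝ)) =
        (1 / 2) * q16 p * fderiv ℝ q16 p ((1 : ℝ), (0 : ℝ), (0 : ℝ)) + (1 / 2) * A p) := by
  refine ⟨A16, contDiffOn_A16, fun p hp => ?_, fun p hp => ?_⟩
  · rw [fderiv_A16_e1 hp, fderiv_fderiv_q16_e1_e1 hp, mul_zero]
  · have hD : 3 * p.2.1 - p.2.2 ^ 3 ≠ 0 := hp
    rw [fderiv_q16_e2 hp, fderiv_q16_e1 hp, A16]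
    field_simp
    ring
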